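/- arXiv:1806.05585 — 2 statements merged into one kernel-verified Lean document; each statement's English description precedes it below -/
import Mathlib

section
/- Suppose f, g : ℕ → ℝ are eventually nonnegative functions with f(k) = Θ(k^{a−1}) and g(k) = Θ(k^{b−1}) for positive integers a, b. Then the convolution h(k) = Σ_{ℓ=0}^{k} f(ℓ)·g(k−ℓ) satisfies h(k) = Θ(k^{a+b−1}). -/
/-!
Let `c₁ k^p ≤ f k ≤ C₁ k^p` and `c₂ k^q ≤ g k ≤ C₂ k^q` for `k ≥ N`, and cut `f` and `g` off
below `N`. For the truncated, nonnegative sequences every term of the convolution at `k` is at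
most `C₁C₂ k^(p+q)`, while the `m = ⌊k/3⌋` terms with `ℓ ∈ [m, 2m)` are each at least
`c₁c₂ m^(p+q)`. The truncation changes the convolution only through the finitely many terms
involving `f ℓ` or `g ℓ` with `ℓ < N`, each of which is `O(k^p)` or `O(k^q)`, hence negligible
against `k^(p+q+1)`.
-/

open Filter

/-- `f = Θ(g)` at infinity: there are constants `c, C > 0` with
`c·g(k) ≤ f(k) ≤ C·g(k)` for all sufficiently large `k`. -/
def BigTheta (f g : ℕ → ℝ) : Prop :=
  ∃ c C : ℝ, 0 < c ∧ 0 < C ∧ ∀ᶠ k in atTop, c * g k ≤ f k ∧ f k ≤ C * g k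

open Asymptotics Finset

def discreteConv {R : Type*} [Semiring R] (f g : ℕ → R) (k : ℕ) : R :=
  ∑ ℓ ∈ range (k + 1), f ℓ * g (k - ℓ)

theorem discreteConv_comm {R : Type*} [CommSemiring R] (f g : ℕ → R) :
    discreteConv f g = discreteConv g f := by
  funext k
  rw [discreteConv, ← sum_range_reflect]
  refine sum_congr rfl fun ℓ hℓ => ?_
  rw [mem_range] at hℓ
  rw [mul_comm, show k + 1 - 1 - ℓ = k - ℓ by omega, Nat.sub_sub_self (by omega)]

theorem discreteConv_sub_discreteConv {R : Type*} [Ring R] (f g F G : ℕ → R) :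
    discreteConv f g - discreteConv F G = discreteConv (f - F) g + discreteConv F (g - G) := by
  funext k
  simp only [discreteConv, Pi.sub_apply, Pi.add_apply, ← sum_sub_distrib, ← sum_add_distrib,
    sub_mul, mul_sub]
  exact sum_congr rfl fun _ _ => by abel

theorem isLittleO_natCast_pow_pow {p r : ℕ} (h : p < r) :
    (fun k : ℕ => (k : ℝ) ^ p) =o[atTop] fun k => (k : ℝ) ^ r :=
  (isLittleO_pow_pow_atTop_of_lt h).comp_tendsto tendsto_natCast_atTop_atTop

theorem BigTheta.isBigO {f u : ℕ → ℝ} (hf : BigTheta f u) (hu : ∀ᶠ k in atTop, 0 ≤ u k) :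
    f =O[atTop] u := by
  obtain ⟨c, C, hc, -, hb⟩ := hf
  refine IsBigO.of_bound C ?_
  filter_upwards [hb, hu] with k ⟨hlo, hhi⟩ hu
  have hcu : 0 ≤ c * u k := mul_nonneg hc.le hu
  rw [Real.norm_eq_abs, Real.norm_of_nonneg hu, abs_le]
  constructor <;> linarith

theorem BigTheta.of_sub_isLittleO {h h' u : ℕ → ℝ} (hh : BigTheta h u)
    (hu : ∀ᶠ k in atTop, 0 ≤ u k) (he : (h' - h) =o[atTop] u) : BigTheta h' u := by
  obtain ⟨c, C, hc, hC, hb⟩ := hh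
  refine ⟨c / 2, C + c / 2, by positivity, by positivity, ?_⟩
  filter_upwards [hb, hu, he.bound (half_pos hc)] with k ⟨hlo, hhi⟩ hu hek
  rw [Pi.sub_apply, Real.norm_eq_abs, Real.norm_of_nonneg hu, abs_le] at hek
  constructor <;> linarith [hek.1, hek.2]

theorem discreteConv_isBigO_of_eq_zero {e g : ℕ → ℝ} {N q : ℕ} (he : ∀ k ≥ N, e k = 0)
    (hg : g =O[atTop] fun k => (k : ℝ) ^ q) :
    discreteConv e g =O[atTop] fun k => (k : ℝ) ^ q := by
  have hsum : (fun k => ∑ ℓ ∈ range N, e ℓ * g (k - ℓ)) =ᶠ[atTop] discreteConv e g := by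
    filter_upwards [eventually_ge_atTop N] with k hk
    refine sum_subset (range_subset_range.2 (by omega)) fun ℓ _ hℓ => ?_
    rw [he ℓ (by simpa using hℓ), zero_mul]
  refine (IsBigO.fun_sum fun ℓ _ => ?_).congr' hsum EventuallyEq.rfl
  have hshift : (fun k : ℕ => ((k - ℓ : ℕ) : ℝ) ^ q) =O[atTop] fun k => (k : ℝ) ^ q :=
    IsBigO.of_bound 1 (Eventually.of_forall fun k => by
      simp only [norm_pow, RCLike.norm_natCast, one_mul]
      gcongr
      exact Nat.sub_le k ℓ)
  exact ((hg.comp_tendsto (tendsto_sub_atTop_nat ℓ)).trans hshift).const_mul_left (e ℓ)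

theorem discreteConv_sub_discreteConv_isLittleO {f g F G : ℕ → ℝ} {N p q : ℕ}
    (hf : f =O[atTop] fun k => (k : ℝ) ^ p) (hg : g =O[atTop] fun k => (k : ℝ) ^ q)
    (hF : ∀ k ≥ N, F k = f k) (hG : ∀ k ≥ N, G k = g k) :
    (discreteConv f g - discreteConv F G) =o[atTop] fun k => (k : ℝ) ^ (p + q + 1) := by
  have hF' : F =O[atTop] fun k => (k : ℝ) ^ p :=
    hf.congr' (eventually_atTop.2 ⟨N, fun k hk => (hF k hk).symm⟩) EventuallyEq.rfl
  rw [discreteConv_sub_discreteConv, discreteConv_comm F]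
  refine IsLittleO.add ?_ ?_
  · exact (discreteConv_isBigO_of_eq_zero (fun k hk => sub_eq_zero.2 (hF k hk).symm) hg
      ).trans_isLittleO (isLittleO_natCast_pow_pow (by omega))
  · exact (discreteConv_isBigO_of_eq_zero (fun k hk => sub_eq_zero.2 (hG k hk).symm) hF'
      ).trans_isLittleO (isLittleO_natCast_pow_pow (by omega))

theorem discreteConv_le {f g : ℕ → ℝ} {C₁ C₂ : ℝ} {p q : ℕ} (hC₁ : 0 ≤ C₁) (hC₂ : 0 ≤ C₂)
    (hg0 : 0 ≤ g) (hf : ∀ k, f k ≤ C₁ * (k : ℝ) ^ p)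
    (hg : ∀ k, g k ≤ C₂ * (k : ℝ) ^ q) (k : ℕ) :
    discreteConv f g k ≤ (k + 1) * (C₁ * C₂ * (k : ℝ) ^ (p + q)) := by
  calc discreteConv f g k ≤ ∑ ℓ ∈ range (k + 1), C₁ * C₂ * (k : ℝ) ^ (p + q) := by
        refine sum_le_sum fun ℓ hℓ => ?_
        have hℓk : ℓ ≤ k := Nat.lt_succ_iff.1 (mem_range.1 hℓ)
        calc f ℓ * g (k - ℓ) ≤ (C₁ * (k : ℝ) ^ p) * (C₂ * (k : ℝ) ^ q) := by
              refine mul_le_mul ((hf ℓ).trans ?_) ((hg _).trans ?_) (hg0 _) (by positivity)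
              · gcongr
              · gcongr
                exact Nat.sub_le k ℓ
          _ = C₁ * C₂ * (k : ℝ) ^ (p + q) := by ring
    _ = (k + 1) * (C₁ * C₂ * (k : ℝ) ^ (p + q)) := by simp

theorem mul_pow_le_discreteConv {f g : ℕ → ℝ} {c₁ c₂ : ℝ} {N p q m k : ℕ} (hc₁ : 0 ≤ c₁)
    (hc₂ : 0 ≤ c₂) (hf0 : 0 ≤ f) (hg0 : 0 ≤ g) (hf : ∀ k ≥ N, c₁ * (k : ℝ) ^ p ≤ f k)
    (hg : ∀ k ≥ N, c₂ * (k : ℝ) ^ q ≤ g k) (hm : N ≤ m) (hk : 3 * m ≤ k) :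
    c₁ * c₂ * (m : ℝ) ^ (p + q + 1) ≤ discreteConv f g k := by
  have hpow {h : ℕ → ℝ} {c : ℝ} {r : ℕ} (hc : 0 ≤ c) (hh : ∀ k ≥ N, c * (k : ℝ) ^ r ≤ h k)
      (ℓ : ℕ) (hℓ : m ≤ ℓ) : c * (m : ℝ) ^ r ≤ h ℓ :=
    le_trans (by gcongr) (hh ℓ (hm.trans hℓ))
  calc c₁ * c₂ * (m : ℝ) ^ (p + q + 1)
      = ∑ ℓ ∈ Ico m (2 * m), (c₁ * (m : ℝ) ^ p) * (c₂ * (m : ℝ) ^ q) := by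
        rw [sum_const, Nat.card_Ico, nsmul_eq_mul, show 2 * m - m = m by omega]
        ring
    _ ≤ ∑ ℓ ∈ Ico m (2 * m), f ℓ * g (k - ℓ) := by
        refine sum_le_sum fun ℓ hℓ => ?_
        rw [mem_Ico] at hℓ
        exact mul_le_mul (hpow hc₁ hf ℓ hℓ.1) (hpow hc₂ hg _ (by omega)) (by positivity) (hf0 ℓ)
    _ ≤ discreteConv f g k :=
        sum_le_sum_of_subset_of_nonneg (fun ℓ hℓ => by simp only [mem_Ico, mem_range] at hℓ ⊢; omega)
          fun ℓ _ _ => mul_nonneg (hf0 ℓ) (hg0 _)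

theorem bigTheta_discreteConv_of_bounds {f g : ℕ → ℝ} {c₁ c₂ C₁ C₂ : ℝ} {N p q : ℕ}
    (hc₁ : 0 < c₁) (hc₂ : 0 < c₂) (hC₁ : 0 < C₁) (hC₂ : 0 < C₂) (hf0 : 0 ≤ f) (hg0 : 0 ≤ g)
    (hfC : ∀ k, f k ≤ C₁ * (k : ℝ) ^ p) (hgC : ∀ k, g k ≤ C₂ * (k : ℝ) ^ q)
    (hfc : ∀ k ≥ N, c₁ * (k : ℝ) ^ p ≤ f k) (hgc : ∀ k ≥ N, c₂ * (k : ℝ) ^ q ≤ g k) :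
    BigTheta (discreteConv f g) fun k => (k : ℝ) ^ (p + q + 1) := by
  refine ⟨c₁ * c₂ / 6 ^ (p + q + 1), 2 * (C₁ * C₂), by positivity, by positivity,
    eventually_atTop.2 ⟨3 * N + 3, fun k hk => ⟨?_, ?_⟩⟩⟩
  · have hk6 : (k : ℝ) / 6 ≤ (k / 3 : ℕ) := by
      rw [div_le_iff₀ (by norm_num)]
      exact_mod_cast (by omega : k ≤ k / 3 * 6)
    calc c₁ * c₂ / 6 ^ (p + q + 1) * (k : ℝ) ^ (p + q + 1)
        = c₁ * c₂ * ((k : ℝ) / 6) ^ (p + q + 1) := by rw [div_pow]; ring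
      _ ≤ c₁ * c₂ * ((k / 3 : ℕ) : ℝ) ^ (p + q + 1) := by gcongr
      _ ≤ discreteConv f g k :=
        mul_pow_le_discreteConv hc₁.le hc₂.le hf0 hg0 hfc hgc (by omega) (by omega)
  · have hk1 : (1 : ℝ) ≤ k := by exact_mod_cast (by omega : 1 ≤ k)
    calc discreteConv f g k ≤ (k + 1) * (C₁ * C₂ * (k : ℝ) ^ (p + q)) :=
          discreteConv_le hC₁.le hC₂.le hg0 hfC hgC k
      _ ≤ (2 * k) * (C₁ * C₂ * (k : ℝ) ^ (p + q)) := by gcongr; linarith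
      _ = 2 * (C₁ * C₂) * (k : ℝ) ^ (p + q + 1) := by ring

theorem indicator_Ici_bounds {f u : ℕ → ℝ} {c C : ℝ} {N : ℕ} (hc : 0 ≤ c) (hC : 0 ≤ C)
    (hu : 0 ≤ u) (hN : ∀ k ≥ N, c * u k ≤ f k ∧ f k ≤ C * u k) :
    0 ≤ (Set.Ici N).indicator f ∧ (∀ k, (Set.Ici N).indicator f k ≤ C * u k) ∧
      ∀ k ≥ N, c * u k ≤ (Set.Ici N).indicator f k := by
  refine ⟨fun k => ?_, fun k => ?_, fun k hk => ?_⟩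
  · rw [Set.indicator_apply]
    split_ifs with hk
    · exact (mul_nonneg hc (hu k)).trans (hN k hk).1
    · rfl
  · rw [Set.indicator_apply]
    split_ifs with hk
    · exact (hN k hk).2
    · exact mul_nonneg hC (hu k)
  · rw [Set.indicator_of_mem (Set.mem_Ici.2 hk)]
    exact (hN k hk).1

theorem BigTheta.discreteConv_natCast_pow {f g : ℕ → ℝ} {p q : ℕ}
    (hf : BigTheta f fun k => (k : ℝ) ^ p) (hg : BigTheta g fun k => (k : ℝ) ^ q) :
    BigTheta (discreteConv f g) fun k => (k : ℝ) ^ (p + q + 1) := by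
  have hu (r : ℕ) : 0 ≤ fun k : ℕ => (k : ℝ) ^ r := fun k => by positivity
  obtain ⟨c₁, C₁, hc₁, hC₁, hfb⟩ := id hf
  obtain ⟨c₂, C₂, hc₂, hC₂, hgb⟩ := id hg
  obtain ⟨N, hN⟩ := eventually_atTop.1 (hfb.and hgb)
  obtain ⟨hF0, hFC, hFc⟩ := indicator_Ici_bounds hc₁.le hC₁.le (hu p) fun k hk => (hN k hk).1
  obtain ⟨hG0, hGC, hGc⟩ := indicator_Ici_bounds hc₂.le hC₂.le (hu q) fun k hk => (hN k hk).2
  refine (bigTheta_discreteConv_of_bounds hc₁ hc₂ hC₁ hC₂ hF0 hG0 hFC hGC hFc hGc).of_sub_isLittleO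
    (Eventually.of_forall (hu _)) ?_
  exact discreteConv_sub_discreteConv_isLittleO (hf.isBigO (Eventually.of_forall (hu p)))
    (hg.isBigO (Eventually.of_forall (hu q))) (fun k hk => Set.indicator_of_mem hk f)
    (fun k hk => Set.indicator_of_mem hk g)

theorem bigTheta_convolution_general (f g : ℕ → ℝ) (a b : ℕ) (ha : 0 < a) (hb : 0 < b)
    (hf : BigTheta f fun k => (k : ℝ) ^ (a - 1))
    (hg : BigTheta g fun k => (k : ℝ) ^ (b - 1)) :
    BigTheta (fun k => ∑ ℓ ∈ Finset.range (k + 1), f ℓ * g (k - ℓ))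
      (fun k => (k : ℝ) ^ (a + b - 1)) := by
  rw [show a + b - 1 = a - 1 + (b - 1) + 1 by omega]
  exact hf.discreteConv_natCast_pow hg

/-- If `f(k) = Θ(k^(a-1))` and `g(k) = Θ(k^(b-1))` with `a, b` positive integers and
`f, g` eventually nonnegative, then the convolution
`h(k) = ∑_{ℓ=0}^k f(ℓ)·g(k-ℓ)` satisfies `h(k) = Θ(k^(a+b-1))`. -/
theorem bigTheta_convolution (f g : ℕ → ℝ) (a b : ℕ) (ha : 0 < a) (hb : 0 < b)
    (hf0 : ∀ᶠ k in atTop, 0 ≤ f k) (hg0 : ∀ᶠ k in atTop, 0 ≤ g k)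
    (hf : BigTheta f fun k => (k : ℝ) ^ (a - 1))
    (hg : BigTheta g fun k => (k : ℝ) ^ (b - 1)) :
    BigTheta (fun k => ∑ ℓ ∈ Finset.range (k + 1), f ℓ * g (k - ℓ))
      (fun k => (k : ℝ) ^ (a + b - 1)) :=
  bigTheta_convolution_general f g a b ha hb hf hg
end

section
/- Let Γ be a finite connected graph with no bivalent vertices, let W be a subset of essential vertices with |W| > 1, and suppose W is not well-separating: some v ∈ W has its open star meeting only one connected component of the vertex explosion Γ_W. Then Δ_Γ^W < Δ_Γ^{|W|}; that is, W does not maximize the number of edge-components of Γ ∖ W among subsets of essential vertices of the same cardinality. Moreover, if |W| ≤ 1 and Δ_Γ^W = Δ_Γ^{|W|}, then either W is well-separating or |W| = Δ_Γ^{|W|} = 1. -/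
/-- A finite multigraph, modeled by half-edges: `V` is the vertex set, `H` the set
of half-edges, `vert` assigns to each half-edge its vertex, and `inv` is the
fixed-point-free involution pairing the two halves of each edge. -/
structure FGraph where
  V : Type
  H : Type
  [fV : Fintype V]
  [fH : Fintype H]
  [dV : DecidableEq V]
  [dH : DecidableEq H]
  vert : H → V
  inv : H → H
  inv_invol : ∀ h, inv (inv h) = h
  inv_ne : ∀ h, inv h ≠ h

attribute [instance] FGraph.fV FGraph.fH FGraph.dV FGraph.dH

namespace FGraph

/-- Two half-edges are identified if they are equal or paired by the involution. -/
def hsetoid (G : FGraph) : Setoid G.H :=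
  ⟨fun a b => b = a ∨ b = G.inv a, by
    constructor
    · exact fun a => Or.inl rfl
    · rintro a b (rfl | rfl)
      · exact Or.inl rfl
      · exact Or.inr (G.inv_invol a).symm
    · rintro a b c (rfl | rfl) (rfl | rfl) <;> simp [G.inv_invol] ⟩

/-- The set of edges: pairs of half-edges exchanged by the involution. -/
def Edge (G : FGraph) := Quotient G.hsetoid

/-- The edge containing a half-edge. -/
def edgeOf (G : FGraph) (h : G.H) : G.Edge := Quotient.mk G.hsetoid h

/-- The valence of a vertex: the number of half-edges at it (a self-loop counts
twice). -/
noncomputable def valence (G : FGraph) (v : G.V) : ℕ := Nat.card {h : G.H // G.vert h = v}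

/-- Incidence between a vertex and an edge. -/
def incid (G : FGraph) (v : G.V) (e : G.Edge) : Prop :=
  ∃ h, G.edgeOf h = e ∧ G.vert h = v

/-- The equivalence relation `∼_W` on edges: two edges are related iff they lie in
the same connected component of `Γ ∖ W`; generated by sharing a vertex not in `W`. -/
def wrel (G : FGraph) (W : Finset G.V) : G.Edge → G.Edge → Prop :=
  Relation.EqvGen fun e e' => ∃ u, u ∉ W ∧ G.incid u e ∧ G.incid u e'

/-- `Δ_Γ^W`: the number of equivalence classes of edges under `∼_W`. -/
noncomputable def DeltaW (G : FGraph) (W : Finset G.V) : ℕ :=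
  Nat.card (Quotient (⟨G.wrel W, Relation.EqvGen.is_equivalence _⟩ : Setoid G.Edge))

/-- `Δ_Γ^i`: the maximum of `Δ_Γ^W` over subsets `W` of essential vertices
(valence `≥ 3`) of cardinality `i`, with value `⊥ = -∞` if there is no such `W`. -/
noncomputable def Delta (G : FGraph) (i : ℕ) : WithBot ℕ :=
  (Finset.univ.filter fun W : Finset G.V =>
      W.card = i ∧ ∀ v ∈ W, 3 ≤ G.valence v).sup
    fun W => (G.DeltaW W : WithBot ℕ)

/-- Disjoint union of graphs. -/
def dsum (G₁ G₂ : FGraph) : FGraph where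
  V := G₁.V ⊕ G₂.V
  H := G₁.H ⊕ G₂.H
  vert := Sum.map G₁.vert G₂.vert ∘ fun h => h.map id id
  inv := Sum.map G₁.inv G₂.inv
  inv_invol := by rintro (h | h) <;> simp [G₁.inv_invol, G₂.inv_invol]
  inv_ne := by rintro (h | h) <;> simp [G₁.inv_ne, G₂.inv_ne]

end FGraph

namespace FGraph

/-- Adjacency of vertices: there is a half-edge from `a` whose partner is at `b`. -/
def adj (G : FGraph) (a b : G.V) : Prop :=
  ∃ h, G.vert h = a ∧ G.vert (G.inv h) = b

/-- A graph is connected if it is nonempty and any two vertices are joined by an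
edge path. -/
def Connected (G : FGraph) : Prop :=
  Nonempty G.V ∧ ∀ a b : G.V, Relation.EqvGen G.adj a b

/-- `W` is well-separating if the open star of each `v ∈ W` meets more than one
connected component of `Γ_W` (equivalently, of `Γ ∖ W`): there are two edges at
`v` lying in distinct components. -/
def WellSep (G : FGraph) (W : Finset G.V) : Prop :=
  ∀ v ∈ W, ∃ e e' : G.Edge, G.incid v e ∧ G.incid v e' ∧ ¬ G.wrel W e e'

end FGraph

/-!
If every edge at `v ∈ W` lies in a single component of `Γ ∖ W`, then `v` separates nothing and
`Δ_Γ^{W ∖ {v}} = Δ_Γ^W`. When `W ∖ {v}` is nonempty, connectedness and smoothness give an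
essential vertex `u ∉ W ∖ {v}` adjacent to `W ∖ {v}`; adding `u` cuts off the edge joining it to
`W ∖ {v}` from the other edges at `u`, so `Δ` strictly increases on a set of cardinality `|W|`.
When `W = {v}`, the same removal gives `Δ_Γ^W = Δ_Γ^∅ = 1` since `Γ` is connected.
-/

theorem Relation.EqvGen.iff_of_forall_rel {α : Type*} {r : α → α → Prop} {P : α → Prop}
    (hP : ∀ x y, r x y → (P x ↔ P y)) {a b : α} (hab : Relation.EqvGen r a b) : P a ↔ P b := by
  induction hab with
  | rel x y hxy => exact hP x y hxy
  | refl => exact Iff.rfl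
  | symm _ _ _ ih => exact ih.symm
  | trans _ _ _ _ _ ih₁ ih₂ => exact ih₁.trans ih₂

theorem Setoid.card_quotient_lt_of_le {α : Type*} [Finite α] {s t : Setoid α} (hst : s ≤ t)
    {a b : α} (hab : t a b) (hnab : ¬ s a b) : Nat.card (Quotient t) < Nat.card (Quotient s) := by
  classical
  cases nonempty_fintype α
  have hsurj : Function.Surjective (Setoid.map_of_le hst) :=
    fun q => q.inductionOn fun x => ⟨Quotient.mk s x, rfl⟩
  have hninj : ¬ Function.Injective (Setoid.map_of_le hst) :=
    fun hinj => hnab <| Quotient.exact <|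
      @hinj (Quotient.mk s a) (Quotient.mk s b) (Quotient.sound hab)
  simpa only [Nat.card_eq_fintype_card] using
    Fintype.card_lt_of_surjective_not_injective _ hsurj hninj

namespace FGraph

variable {G : FGraph}

instance : Finite G.Edge := inferInstanceAs (Finite (Quotient G.hsetoid))

lemma edgeOf_inv (h : G.H) : G.edgeOf (G.inv h) = G.edgeOf h :=
  Quotient.sound (Or.inr (G.inv_invol h).symm)

lemma eq_or_eq_inv_of_edgeOf_eq {h h' : G.H} (he : G.edgeOf h' = G.edgeOf h) :
    h' = h ∨ h' = G.inv h := by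
  rcases Quotient.exact he with he | he
  · exact Or.inl he.symm
  · exact Or.inr (by rw [he, G.inv_invol])

lemma incid_edgeOf (h : G.H) : G.incid (G.vert h) (G.edgeOf h) := ⟨h, rfl, rfl⟩

lemma valence_eq_ncard (v : G.V) : G.valence v = {h | G.vert h = v}.ncard :=
  Nat.card_coe_set_eq _

lemma exists_vert_eq_of_valence_pos {v : G.V} (hv : 0 < G.valence v) : ∃ h, G.vert h = v := by
  obtain ⟨⟨h, hh⟩⟩ := (Nat.card_pos_iff.mp hv).1
  exact ⟨h, hh⟩

lemma two_le_valence {h₁ h₂ : G.H} (hne : h₁ ≠ h₂) (hv : G.vert h₁ = G.vert h₂) :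
    2 ≤ G.valence (G.vert h₁) := by
  rw [valence_eq_ncard, ← Set.ncard_pair hne]
  exact Set.ncard_le_ncard (by rintro _ (rfl | rfl) <;> simp [hv])

lemma exists_edgeOf_ne_of_three_le_valence {u : G.V} (hu : 3 ≤ G.valence u) (e : G.Edge) :
    ∃ h, G.vert h = u ∧ G.edgeOf h ≠ e := by
  obtain ⟨h₀, rfl⟩ := exists_vert_eq_of_valence_pos (by omega : 0 < G.valence u)
  by_contra! hall
  have hsub : {h | G.vert h = G.vert h₀} ⊆ {h₀, G.inv h₀} := fun h hh =>
    eq_or_eq_inv_of_edgeOf_eq ((hall h hh).trans (hall h₀ rfl).symm)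
  have := (Set.ncard_le_ncard hsub).trans (Set.ncard_insert_le _ _)
  rw [Set.ncard_singleton, ← valence_eq_ncard] at this
  omega

/-- `G.DeltaW W` is by definition `Nat.card (Quotient (G.wsetoid W))`. -/
def wsetoid (G : FGraph) (W : Finset G.V) : Setoid G.Edge :=
  ⟨G.wrel W, Relation.EqvGen.is_equivalence _⟩

lemma wrel_of_vert_eq {W : Finset G.V} {h₁ h₂ : G.H} (hv : G.vert h₁ = G.vert h₂)
    (hW : G.vert h₁ ∉ W) : G.wrel W (G.edgeOf h₁) (G.edgeOf h₂) :=
  .rel _ _ ⟨_, hW, incid_edgeOf h₁, hv ▸ incid_edgeOf h₂⟩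

lemma wrel_anti {S T : Finset G.V} (hST : S ⊆ T) : G.wsetoid T ≤ G.wsetoid S :=
  Relation.EqvGen.mono fun _ _ ⟨z, hz, h₁, h₂⟩ => ⟨z, fun hzS => hz (hST hzS), h₁, h₂⟩

lemma deltaW_lt_of_subset {S T : Finset G.V} (hST : S ⊆ T) {e e' : G.Edge}
    (hS : G.wrel S e e') (hT : ¬ G.wrel T e e') : G.DeltaW S < G.DeltaW T :=
  Setoid.card_quotient_lt_of_le (wrel_anti hST) hS hT

lemma eq_of_wrel_of_forall_vert_mem {T : Finset G.V} {e e' : G.Edge}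
    (hT : ∀ h, G.edgeOf h = e → G.vert h ∈ T) (he : G.wrel T e e') : e' = e := by
  have hP : ∀ x y, (∃ u, u ∉ T ∧ G.incid u x ∧ G.incid u y) → (x = e ↔ y = e) := by
    rintro x y ⟨u, hu, ⟨h₁, rfl, rfl⟩, ⟨h₂, rfl, hv⟩⟩
    exact iff_of_false (fun hx => hu (hT h₁ hx)) (fun hy => hu (hv ▸ hT h₂ hy))
  exact (Relation.EqvGen.iff_of_forall_rel hP he).1 rfl

/-- Once `u = G.vert h₀` joins `S`, the edge of `h₀` has both ends in `insert u S` and is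
isolated, whereas modulo `∼_S` it was linked through `u` to a different edge at `u`. -/
lemma deltaW_lt_deltaW_insert {S : Finset G.V} {h₀ : G.H} (hu : 3 ≤ G.valence (G.vert h₀))
    (huS : G.vert h₀ ∉ S) (hadj : G.vert (G.inv h₀) ∈ S) :
    G.DeltaW S < G.DeltaW (insert (G.vert h₀) S) := by
  obtain ⟨h₁, hv₁, hne⟩ := exists_edgeOf_ne_of_three_le_valence hu (G.edgeOf h₀)
  have hends : ∀ h, G.edgeOf h = G.edgeOf h₀ → G.vert h ∈ insert (G.vert h₀) S := by
    intro h he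
    rcases eq_or_eq_inv_of_edgeOf_eq he with rfl | rfl
    · exact Finset.mem_insert_self _ _
    · exact Finset.mem_insert_of_mem hadj
  exact deltaW_lt_of_subset (Finset.subset_insert _ _) (wrel_of_vert_eq hv₁.symm huS)
    fun hw => hne (eq_of_wrel_of_forall_vert_mem hends hw)

lemma wsetoid_erase {W : Finset G.V} {v : G.V}
    (hv : ∀ e, G.incid v e → ∀ e', G.incid v e' → G.wrel W e e') :
    G.wsetoid (W.erase v) = G.wsetoid W := by
  refine le_antisymm (Setoid.eqvGen_le ?_) (wrel_anti (W.erase_subset v))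
  rintro a b ⟨z, hz, ha, hb⟩
  by_cases hzv : z = v
  · subst hzv
    exact hv a ha b hb
  · exact .rel _ _ ⟨z, fun hzW => hz (Finset.mem_erase.2 ⟨hzv, hzW⟩), ha, hb⟩

lemma exists_deltaW_erase_eq_of_not_wellSep {W : Finset G.V} (hW : ¬ G.WellSep W) :
    ∃ v ∈ W, G.DeltaW (W.erase v) = G.DeltaW W := by
  obtain ⟨v, hvW, hv⟩ : ∃ v ∈ W, ∀ e, G.incid v e → ∀ e', G.incid v e' → G.wrel W e e' := by
    simpa [WellSep] using hW
  exact ⟨v, hvW, congrArg (fun s => Nat.card (Quotient s)) (wsetoid_erase hv)⟩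

lemma wrel_empty_of_connected (hconn : G.Connected) (e e' : G.Edge) : G.wrel ∅ e e' := by
  obtain ⟨h, rfl⟩ := Quotient.exists_rep e
  obtain ⟨h', rfl⟩ := Quotient.exists_rep e'
  let P : G.V → Prop := fun a => ∃ h₁, G.vert h₁ = a ∧ G.wrel ∅ (G.edgeOf h) (G.edgeOf h₁)
  have hP : ∀ a b, G.adj a b → (P a ↔ P b) := by
    rintro _ _ ⟨h₀, rfl, rfl⟩
    constructor
    · rintro ⟨h₁, hv, hw⟩
      refine ⟨G.inv h₀, rfl, .trans _ _ _ hw ?_⟩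
      rw [edgeOf_inv]
      exact wrel_of_vert_eq hv (Finset.notMem_empty _)
    · rintro ⟨h₁, hv, hw⟩
      refine ⟨h₀, rfl, .trans _ _ _ hw ?_⟩
      rw [← edgeOf_inv h₀]
      exact wrel_of_vert_eq hv (Finset.notMem_empty _)
  obtain ⟨h₁, hv, hw⟩ := (Relation.EqvGen.iff_of_forall_rel hP (hconn.2 (G.vert h) (G.vert h'))).1
    ⟨h, rfl, .refl _⟩
  exact .trans _ _ _ hw (wrel_of_vert_eq hv (Finset.notMem_empty _))

lemma deltaW_empty_of_connected (hconn : G.Connected) (e : G.Edge) : G.DeltaW ∅ = 1 :=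
  Nat.card_eq_one_iff_unique.2
    ⟨⟨fun x y => Quotient.inductionOn₂ x y fun a b =>
      Quotient.sound (wrel_empty_of_connected hconn a b)⟩, ⟨Quotient.mk _ e⟩⟩

lemma exists_essential_adj_of_connected (hconn : G.Connected) (hsmooth : ∀ v, G.valence v ≠ 2)
    {S : Finset G.V} {x y : G.H} (hx : 3 ≤ G.valence (G.vert x)) (hxS : G.vert x ∉ S)
    (hyS : G.vert y ∈ S) :
    ∃ h, 3 ≤ G.valence (G.vert h) ∧ G.vert h ∉ S ∧ G.vert (G.inv h) ∈ S := by
  -- Otherwise "having an essential end outside `S`" is invariant under `∼_∅`: at a shared vertex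
  -- in `S` it fails for both edges, and a vertex outside `S` shared by two edges is essential
  -- by smoothness.
  by_contra! hno
  let P : G.Edge → Prop := fun e =>
    ∃ h, G.edgeOf h = e ∧ 3 ≤ G.valence (G.vert h) ∧ G.vert h ∉ S
  have hPS : ∀ h, G.vert h ∈ S → ¬ P (G.edgeOf h) := by
    rintro h hS ⟨h', he, h3, hS'⟩
    rcases eq_or_eq_inv_of_edgeOf_eq he with rfl | rfl
    · exact hS' hS
    · exact hno _ h3 hS' (by rwa [G.inv_invol])
  have hP : ∀ a b, (∃ u, u ∉ (∅ : Finset G.V) ∧ G.incid u a ∧ G.incid u b) → (P a ↔ P b) := by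
    rintro _ _ ⟨u, -, ⟨h₁, rfl, rfl⟩, ⟨h₂, rfl, hu⟩⟩
    by_cases hS : G.vert h₁ ∈ S
    · exact iff_of_false (hPS h₁ hS) (hPS h₂ (hu ▸ hS))
    by_cases he : G.edgeOf h₁ = G.edgeOf h₂
    · rw [he]
    have h3 : 3 ≤ G.valence (G.vert h₁) := by
      have := two_le_valence (fun h => he (congrArg _ h)) hu.symm
      have := hsmooth (G.vert h₁)
      omega
    exact iff_of_true ⟨h₁, rfl, h3, hS⟩ ⟨h₂, rfl, hu ▸ h3, hu ▸ hS⟩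
  exact hPS y hyS ((Relation.EqvGen.iff_of_forall_rel hP
    (wrel_empty_of_connected hconn _ _)).1 ⟨x, rfl, hx, hxS⟩)

lemma exists_deltaW_lt_deltaW_insert (hconn : G.Connected) (hsmooth : ∀ v, G.valence v ≠ 2)
    {S : Finset G.V} {v w : G.V} (hv : 3 ≤ G.valence v) (hvS : v ∉ S) (hw : 0 < G.valence w)
    (hwS : w ∈ S) : ∃ u, 3 ≤ G.valence u ∧ u ∉ S ∧ G.DeltaW S < G.DeltaW (insert u S) := by
  obtain ⟨x, rfl⟩ := exists_vert_eq_of_valence_pos (by omega : 0 < G.valence v)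
  obtain ⟨y, rfl⟩ := exists_vert_eq_of_valence_pos hw
  obtain ⟨h, hu3, huS, hadj⟩ := exists_essential_adj_of_connected hconn hsmooth hv hvS hwS
  exact ⟨_, hu3, huS, deltaW_lt_deltaW_insert hu3 huS hadj⟩

lemma deltaW_le_delta {W : Finset G.V} (hW : ∀ v ∈ W, 3 ≤ G.valence v) :
    (G.DeltaW W : WithBot ℕ) ≤ G.Delta W.card :=
  Finset.le_sup (f := fun W' => (G.DeltaW W' : WithBot ℕ))
    (Finset.mem_filter.2 ⟨Finset.mem_univ _, rfl, hW⟩)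

end FGraph

theorem not_max_of_not_wellSeparating_general (G : FGraph)
    (hconn : G.Connected)
    (hsmooth : ∀ v : G.V, G.valence v ≠ 2)
    (W : Finset G.V) (hW : ∀ v ∈ W, 3 ≤ G.valence v) :
    (1 < W.card → ¬ G.WellSep W →
      (G.DeltaW W : WithBot ℕ) < G.Delta W.card) ∧
    (W.card ≤ 1 → (G.DeltaW W : WithBot ℕ) = G.Delta W.card →
      (G.WellSep W ∨ (W.card = 1 ∧ G.Delta W.card = 1))) := by
  constructor
  · intro hcard hns
    obtain ⟨v, hvW, hv⟩ := FGraph.exists_deltaW_erase_eq_of_not_wellSep hns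
    obtain ⟨w, hw⟩ : (W.erase v).Nonempty :=
      Finset.card_pos.1 (by rw [Finset.card_erase_of_mem hvW]; omega)
    obtain ⟨u, hu3, huS, hlt⟩ := FGraph.exists_deltaW_lt_deltaW_insert hconn hsmooth
      (hW v hvW) (W.notMem_erase v) (by linarith [hW w (Finset.mem_of_mem_erase hw)]) hw
    have hcard' : (insert u (W.erase v)).card = W.card := by
      rw [Finset.card_insert_of_notMem huS, Finset.card_erase_of_mem hvW]
      omega
    calc (G.DeltaW W : WithBot ℕ) = G.DeltaW (W.erase v) := by rw [hv]
      _ < G.DeltaW (insert u (W.erase v)) := by exact_mod_cast hlt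
      _ ≤ G.Delta W.card := hcard' ▸ FGraph.deltaW_le_delta ((Finset.forall_mem_insert _ _ _).2
        ⟨hu3, fun x hx => hW x (Finset.mem_of_mem_erase hx)⟩)
  · intro hcard hdelta
    refine or_iff_not_imp_left.2 fun hns => ?_
    obtain ⟨v, hvW, hv⟩ := FGraph.exists_deltaW_erase_eq_of_not_wellSep hns
    have hW1 : W = {v} := Finset.eq_singleton_iff_unique_mem.2
      ⟨hvW, fun x hx => Finset.card_le_one.1 hcard x hx v hvW⟩
    obtain ⟨h, rfl⟩ := FGraph.exists_vert_eq_of_valence_pos (by linarith [hW v hvW])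
    have hone : G.DeltaW W = 1 := by
      rw [← hv, hW1, Finset.erase_singleton, FGraph.deltaW_empty_of_connected hconn (G.edgeOf h)]
    exact ⟨by rw [hW1, Finset.card_singleton], by rw [← hdelta, hone]; rfl⟩

/-- Let `Γ` be a finite connected smooth graph (no bivalent vertices) with at least
one essential vertex, and let `W` be a set of essential vertices.  If `|W| > 1` and
`W` is not well-separating, then `Δ_Γ^W < Δ_Γ^{|W|}`, i.e. `W` does not maximize
the number of edge components of `Γ ∖ W` among sets of essential vertices of the
same cardinality.  Moreover if `|W| ≤ 1` and `Δ_Γ^W = Δ_Γ^{|W|}`, then either `W`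
is well-separating or `|W| = Δ_Γ^{|W|} = 1`. -/
theorem not_max_of_not_wellSeparating (G : FGraph)
    (hconn : G.Connected)
    (hsmooth : ∀ v : G.V, G.valence v ≠ 2)
    (hess : ∃ v : G.V, 3 ≤ G.valence v)
    (W : Finset G.V) (hW : ∀ v ∈ W, 3 ≤ G.valence v) :
    (1 < W.card → ¬ G.WellSep W →
      (G.DeltaW W : WithBot ℕ) < G.Delta W.card) ∧
    (W.card ≤ 1 → (G.DeltaW W : WithBot ℕ) = G.Delta W.card →
      (G.WellSep W ∨ (W.card = 1 ∧ G.Delta W.card = 1))) :=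
  not_max_of_not_wellSeparating_general G hconn hsmooth W hW
end
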